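/- Let (X_t) be a simple random walk on Λ started at a vertex v₀ of depth m₀, and set D_t := depth(X_{2t}). Then almost surely liminf_{t→∞} D_t/t ≥ 1/6, and for every integer t ≥ 12, P[D_t ≤ m₀ + 1] ≤ exp(−t/1152). -/

import Mathlib

open MeasureTheory Filter Topology
open scoped ENNReal Classical

noncomputable instance : MeasurableSpace ℤ_[2] := borel ℤ_[2]
instance : BorelSpace ℤ_[2] := ⟨rfl⟩

/-- The dyadic lattice graph `Λ` on vertex set `ℤ × ℤ₂`. -/
def Lambda : SimpleGraph (ℤ × ℤ_[2]) where
  Adj u v :=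
    (u.1 = v.1 ∧ (v.2 = u.2 + 1 ∨ v.2 = u.2 - 1)) ∨
    (v.1 = u.1 + 1 ∧ v.2 = 2 * u.2) ∨ (u.1 = v.1 + 1 ∧ u.2 = 2 * v.2)
  symm := by
    constructor
    rintro ⟨m, b⟩ ⟨n, c⟩ (⟨h1, h2 | h2⟩ | ⟨h1, h2⟩ | ⟨h1, h2⟩)
    · exact Or.inl ⟨h1.symm, Or.inr (by rw [h2]; ring)⟩
    · exact Or.inl ⟨h1.symm, Or.inl (by rw [h2]; ring)⟩
    · exact Or.inr (Or.inr ⟨h1, h2⟩)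
    · exact Or.inr (Or.inl ⟨h1, h2⟩)
  loopless := by
    constructor
    rintro ⟨m, b⟩ (⟨h1, h2 | h2⟩ | ⟨h1, h2⟩ | ⟨h1, h2⟩)
    · exact one_ne_zero (by linear_combination -h2)
    · exact one_ne_zero (by linear_combination h2)
    · omega
    · omega

/-- The degree (3 or 4) of a vertex of `Λ`. -/
noncomputable def lamDeg (u : ℤ × ℤ_[2]) : ℕ := if (2 : ℤ_[2]) ∣ u.2 then 4 else 3

/-- `X` is a simple random walk on `Λ`, defined on `(Ω, P)`, started at `v₀`. -/
def IsWalkL {Ω : Type} [MeasurableSpace Ω] (P : Measure Ω) (X : ℕ → Ω → ℤ × ℤ_[2])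
    (v₀ : ℤ × ℤ_[2]) : Prop :=
  (∀ t, Measurable (X t)) ∧ P {ω | X 0 ω = v₀} = 1 ∧
    ∀ t (u w : ℤ × ℤ_[2]),
      P {ω | X (t + 1) ω = w ∧ X t ω = u} =
        if Lambda.Adj u w then P {ω | X t ω = u} / (lamDeg u : ℝ≥0∞) else 0
-- auxiliary definitions and lemmas

lemma dvd_iff_toZMod (b : ℤ_[2]) : (2:ℤ_[2]) ∣ b ↔ PadicInt.toZMod b = 0 := by
  rw [← RingHom.mem_ker, PadicInt.ker_toZMod, PadicInt.maximalIdeal_eq_span_p,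
    Ideal.mem_span_singleton]
  norm_num

lemma two_dvd_add_one {b : ℤ_[2]} (h : ¬ (2:ℤ_[2]) ∣ b) : (2:ℤ_[2]) ∣ (b+1) := by
  rw [dvd_iff_toZMod] at h ⊢
  rw [map_add, map_one]
  have : ∀ x : ZMod 2, x ≠ 0 → x + 1 = 0 := by decide
  exact this _ h

lemma two_dvd_sub_one {b : ℤ_[2]} (h : ¬ (2:ℤ_[2]) ∣ b) : (2:ℤ_[2]) ∣ (b-1) := by
  rw [dvd_iff_toZMod] at h ⊢
  rw [map_sub, map_one]
  have : ∀ x : ZMod 2, x ≠ 0 → x - 1 = 0 := by decide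
  exact this _ h

lemma not_two_dvd_add_one {b : ℤ_[2]} (h : (2:ℤ_[2]) ∣ b) : ¬ (2:ℤ_[2]) ∣ (b+1) := by
  rw [dvd_iff_toZMod] at h ⊢
  rw [map_add, map_one]
  have : ∀ x : ZMod 2, x = 0 → ¬ (x + 1 = 0) := by decide
  exact this _ h

lemma not_two_dvd_sub_one {b : ℤ_[2]} (h : (2:ℤ_[2]) ∣ b) : ¬ (2:ℤ_[2]) ∣ (b-1) := by
  rw [dvd_iff_toZMod] at h ⊢
  rw [map_sub, map_one]
  have : ∀ x : ZMod 2, x = 0 → ¬ (x - 1 = 0) := by decide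
  exact this _ h

/-- half of a 2-adic integer (junk if not divisible). -/
noncomputable def hlf (b : ℤ_[2]) : ℤ_[2] := if h : (2:ℤ_[2]) ∣ b then h.choose else 0

lemma hlf_spec {b : ℤ_[2]} (h : (2:ℤ_[2]) ∣ b) : 2 * hlf b = b := by
  rw [hlf, dif_pos h]; exact h.choose_spec.symm

lemma hlf_eq {b c : ℤ_[2]} (h : b = 2 * c) : hlf b = c := by
  have h2 : (2:ℤ_[2]) ∣ b := ⟨c, h⟩
  have := hlf_spec h2
  have h20 : (2:ℤ_[2]) ≠ 0 := two_ne_zero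
  apply mul_left_cancel₀ h20
  rw [this, h]

/-- the neighbours of a vertex -/
noncomputable def Nbr (u : ℤ × ℤ_[2]) : Finset (ℤ × ℤ_[2]) :=
  if (2:ℤ_[2]) ∣ u.2 then
    {(u.1, u.2+1), (u.1, u.2-1), (u.1+1, 2*u.2), (u.1-1, hlf u.2)}
  else
    {(u.1, u.2+1), (u.1, u.2-1), (u.1+1, 2*u.2)}

lemma mem_Nbr_iff (u w : ℤ × ℤ_[2]) : w ∈ Nbr u ↔ Lambda.Adj u w := by
  constructor
  · intro hw
    rw [Nbr] at hw
    by_cases h : (2:ℤ_[2]) ∣ u.2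
    · rw [if_pos h] at hw
      simp only [Finset.mem_insert, Finset.mem_singleton] at hw
      rcases hw with h1 | h1 | h1 | h1 <;> subst h1 <;>
        simp [Lambda, hlf_spec h]
    · rw [if_neg h] at hw
      simp only [Finset.mem_insert, Finset.mem_singleton] at hw
      rcases hw with h1 | h1 | h1 <;> subst h1 <;> simp [Lambda]
  · intro hadj
    rcases hadj with ⟨h1, h2 | h2⟩ | ⟨h1, h2⟩ | ⟨h1, h2⟩
    all_goals rw [Nbr]; by_cases h : (2:ℤ_[2]) ∣ u.2
    · rw [if_pos h]; simp only [Finset.mem_insert, Finset.mem_singleton]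
      left; exact Prod.ext h1.symm h2
    · rw [if_neg h]; simp only [Finset.mem_insert, Finset.mem_singleton]
      left; exact Prod.ext h1.symm h2
    · rw [if_pos h]; simp only [Finset.mem_insert, Finset.mem_singleton]
      right; left; exact Prod.ext h1.symm h2
    · rw [if_neg h]; simp only [Finset.mem_insert, Finset.mem_singleton]
      right; left; exact Prod.ext h1.symm h2
    · rw [if_pos h]; simp only [Finset.mem_insert, Finset.mem_singleton]
      right; right; left; exact Prod.ext h1 h2
    · rw [if_neg h]; simp only [Finset.mem_insert, Finset.mem_singleton]
      right; right; exact Prod.ext h1 h2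
    · rw [if_pos h]; simp only [Finset.mem_insert, Finset.mem_singleton]
      right; right; right
      exact Prod.ext (by omega) ((hlf_eq h2).symm)
    · exact absurd ⟨w.2, h2⟩ h

lemma card_Nbr (u : ℤ × ℤ_[2]) : (Nbr u).card = lamDeg u := by
  have hne : (u.2 + 1) ≠ (u.2 - 1) := by
    intro h
    have h2 : (2:ℤ_[2]) = 0 := by linear_combination h
    exact two_ne_zero h2
  have fst3 : ((u.1+1, 2*u.2) : ℤ × ℤ_[2]) ∉ ({(u.1-1, hlf u.2)} : Finset (ℤ × ℤ_[2])) := by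
    intro hm
    have := congrArg Prod.fst (Finset.mem_singleton.mp hm); simp at this <;> omega
  have fst2 : ((u.1, u.2-1) : ℤ × ℤ_[2]) ∉ ({(u.1+1, 2*u.2), (u.1-1, hlf u.2)} : Finset (ℤ × ℤ_[2])) := by
    intro hm
    rcases Finset.mem_insert.mp hm with h | h
    · have := congrArg Prod.fst h; simp at this <;> omega
    · have := congrArg Prod.fst (Finset.mem_singleton.mp h); simp at this <;> omega
  have fst2' : ((u.1, u.2-1) : ℤ × ℤ_[2]) ∉ ({(u.1+1, 2*u.2)} : Finset (ℤ × ℤ_[2])) := by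
    intro hm
    have := congrArg Prod.fst (Finset.mem_singleton.mp hm); simp at this <;> omega
  have fst1 : ((u.1, u.2+1) : ℤ × ℤ_[2]) ∉ ({(u.1, u.2-1), (u.1+1, 2*u.2), (u.1-1, hlf u.2)} : Finset (ℤ × ℤ_[2])) := by
    intro hm
    rcases Finset.mem_insert.mp hm with h | hm
    · exact hne (congrArg Prod.snd h)
    rcases Finset.mem_insert.mp hm with h | h
    · have := congrArg Prod.fst h; simp at this <;> omega
    · have := congrArg Prod.fst (Finset.mem_singleton.mp h); simp at this <;> omega
  have fst1' : ((u.1, u.2+1) : ℤ × ℤ_[2]) ∉ ({(u.1, u.2-1), (u.1+1, 2*u.2)} : Finset (ℤ × ℤ_[2])) := by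
    intro hm
    rcases Finset.mem_insert.mp hm with h | h
    · exact hne (congrArg Prod.snd h)
    · have := congrArg Prod.fst (Finset.mem_singleton.mp h); simp at this <;> omega
  rw [Nbr, lamDeg]
  by_cases h : (2:ℤ_[2]) ∣ u.2
  · rw [if_pos h, if_pos h, Finset.card_insert_of_notMem fst1,
      Finset.card_insert_of_notMem fst2, Finset.card_insert_of_notMem fst3,
      Finset.card_singleton]
  · rw [if_neg h, if_neg h, Finset.card_insert_of_notMem fst1',
      Finset.card_insert_of_notMem fst2', Finset.card_singleton]

lemma Nbr_depth {u w : ℤ × ℤ_[2]} (h : w ∈ Nbr u) : w.1 ≤ u.1 + 1 := by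
  rw [Nbr] at h
  by_cases hd : (2:ℤ_[2]) ∣ u.2 <;>
    simp only [if_pos, if_neg, hd, if_true, if_false, Finset.mem_insert,
      Finset.mem_singleton] at h
  · rcases h with h|h|h|h <;> subst h <;> simp <;> omega
  · rcases h with h|h|h <;> subst h <;> simp <;> omega

noncomputable def gp (b : ℤ_[2]) : ℝ := if (2:ℤ_[2]) ∣ b then 1011/1000 else 1
noncomputable def wt (u : ℤ × ℤ_[2]) : ℝ := (21/20:ℝ)^(-u.1) * gp u.2

lemma gp_ge_one (b : ℤ_[2]) : 1 ≤ gp b := by rw [gp]; split <;> norm_num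
lemma gp_le (b : ℤ_[2]) : gp b ≤ 1011/1000 := by rw [gp]; split <;> norm_num
lemma wt_pos (u : ℤ × ℤ_[2]) : 0 < wt u := by
  have := gp_ge_one u.2
  have h2 : (0:ℝ) < (21/20:ℝ)^(-u.1) := zpow_pos (by norm_num) _
  rw [wt]; nlinarith

lemma sum_wt_Nbr (u : ℤ × ℤ_[2]) :
    ∑ w ∈ Nbr u, wt w ≤ (622/625) * (lamDeg u) * wt u := by
  obtain ⟨m, b⟩ := u
  have hR : (0:ℝ) < 21/20 := by norm_num
  have ha : (0:ℝ) < (21/20:ℝ)^(-m) := zpow_pos hR _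
  set a : ℝ := (21/20:ℝ)^(-m) with haa
  have hne : (21/20:ℝ) ≠ 0 := by norm_num
  have hsub : (21/20:ℝ)^(-(m+1)) = a * (20/21) := by
    have e : -(m+1) = -m + (-1) := by ring
    rw [haa, e, zpow_add₀ hne, zpow_neg_one]
    norm_num
  have hadd : (21/20:ℝ)^(-(m-1)) = a * (21/20) := by
    have e : -(m-1) = -m + 1 := by ring
    rw [haa, e, zpow_add₀ hne, zpow_one]
  have gp2 : gp (2*b) = 1011/1000 := by rw [gp, if_pos ⟨b, rfl⟩]
  by_cases h : (2:ℤ_[2]) ∣ b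
  · have n1 : ((m, b+1) : ℤ × ℤ_[2]) ∉ ({(m, b-1), (m+1, 2*b), (m-1, hlf b)} : Finset (ℤ × ℤ_[2])) := by
      intro hm
      rcases Finset.mem_insert.mp hm with hx | hm
      · have h2 := congrArg Prod.snd hx
        simp only at h2
        have : (2:ℤ_[2]) = 0 := by linear_combination h2
        exact two_ne_zero this
      rcases Finset.mem_insert.mp hm with hx | hx
      · have := congrArg Prod.fst hx; simp at this <;> omega
      · have := congrArg Prod.fst (Finset.mem_singleton.mp hx); simp at this <;> omega
    have n2 : ((m, b-1) : ℤ × ℤ_[2]) ∉ ({(m+1, 2*b), (m-1, hlf b)} : Finset (ℤ × ℤ_[2])) := by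
      intro hm
      rcases Finset.mem_insert.mp hm with hx | hx
      · have := congrArg Prod.fst hx; simp at this <;> omega
      · have := congrArg Prod.fst (Finset.mem_singleton.mp hx); simp at this <;> omega
    have n3 : ((m+1, 2*b) : ℤ × ℤ_[2]) ∉ ({(m-1, hlf b)} : Finset (ℤ × ℤ_[2])) := by
      intro hm
      have := congrArg Prod.fst (Finset.mem_singleton.mp hm); simp at this; omega
    have hs : ∑ w ∈ Nbr (m, b), wt w
        = wt (m, b+1) + wt (m, b-1) + wt (m+1, 2*b) + wt (m-1, hlf b) := by
      rw [Nbr]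
      simp only [if_pos h]
      rw [Finset.sum_insert n1, Finset.sum_insert n2, Finset.sum_insert n3,
        Finset.sum_singleton]
      ring
    rw [hs, lamDeg]
    simp only [if_pos h]
    have w1 : wt (m, b+1) = a := by
      rw [wt, gp, if_neg (not_two_dvd_add_one h)]; simp [haa]
    have w2 : wt (m, b-1) = a := by
      rw [wt, gp, if_neg (not_two_dvd_sub_one h)]; simp [haa]
    have w3 : wt (m+1, 2*b) = a * (20/21) * (1011/1000) := by
      rw [wt]; simp only
      rw [gp2, hsub]
    have w4 : wt (m-1, hlf b) ≤ a * (21/20) * (1011/1000) := by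
      rw [wt]; simp only
      rw [hadd]
      have := gp_le (hlf b)
      have := gp_ge_one (hlf b)
      nlinarith
    have wu : wt (m, b) = a * (1011/1000) := by
      rw [wt, gp, if_pos h]
    rw [w1, w2, w3, wu]
    push_cast
    nlinarith
  · have n1 : ((m, b+1) : ℤ × ℤ_[2]) ∉ ({(m, b-1), (m+1, 2*b)} : Finset (ℤ × ℤ_[2])) := by
      intro hm
      rcases Finset.mem_insert.mp hm with hx | hx
      · have h2 := congrArg Prod.snd hx
        simp only at h2
        have : (2:ℤ_[2]) = 0 := by linear_combination h2
        exact two_ne_zero this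
      · have := congrArg Prod.fst (Finset.mem_singleton.mp hx); simp at this <;> omega
    have n2 : ((m, b-1) : ℤ × ℤ_[2]) ∉ ({(m+1, 2*b)} : Finset (ℤ × ℤ_[2])) := by
      intro hm
      have := congrArg Prod.fst (Finset.mem_singleton.mp hm); simp at this <;> omega
    have hs : ∑ w ∈ Nbr (m, b), wt w
        = wt (m, b+1) + wt (m, b-1) + wt (m+1, 2*b) := by
      rw [Nbr]
      simp only [if_neg h]
      rw [Finset.sum_insert n1, Finset.sum_insert n2, Finset.sum_singleton]
      ring
    rw [hs, lamDeg]
    simp only [if_neg h]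
    have w1 : wt (m, b+1) = a * (1011/1000) := by
      rw [wt, gp, if_pos (two_dvd_add_one h)]
    have w2 : wt (m, b-1) = a * (1011/1000) := by
      rw [wt, gp, if_pos (two_dvd_sub_one h)]
    have w3 : wt (m+1, 2*b) = a * (20/21) * (1011/1000) := by
      rw [wt]; simp only
      rw [gp2, hsub]
    have wu : wt (m, b) = a := by
      rw [wt, gp, if_neg h]; simp [haa]
    rw [w1, w2, w3, wu]
    push_cast
    nlinarith

/-- reachable set after `n` steps -/
noncomputable def Sset (v₀ : ℤ × ℤ_[2]) : ℕ → Finset (ℤ × ℤ_[2])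
  | 0 => {v₀}
  | n+1 => (Sset v₀ n).biUnion Nbr

lemma Sset_depth (v₀ : ℤ × ℤ_[2]) : ∀ n, ∀ u ∈ Sset v₀ n, u.1 ≤ v₀.1 + n := by
  intro n
  induction n with
  | zero => intro u hu; rw [Sset, Finset.mem_singleton] at hu; subst hu; simp
  | succ n ih =>
    intro u hu
    rw [Sset, Finset.mem_biUnion] at hu
    obtain ⟨v, hv, huv⟩ := hu
    have := Nbr_depth huv
    have := ih v hv
    push_cast
    omega

section Walk
variable {Ω : Type} [MeasurableSpace Ω] (P : Measure Ω) [IsProbabilityMeasure P]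
  (X : ℕ → Ω → ℤ × ℤ_[2]) (hm : ∀ t, Measurable (X t))
include hm

lemma meas_ev (n : ℕ) (u : ℤ × ℤ_[2]) : MeasurableSet {ω | X n ω = u} :=
  (hm n) (measurableSet_singleton u)

lemma meas_ev_fin (n : ℕ) (T : Finset (ℤ × ℤ_[2])) :
    MeasurableSet {ω | X n ω ∈ T} :=
  (hm n) (T.measurableSet)

lemma meas_inter_finset (E : Set Ω) (hE : MeasurableSet E) (n : ℕ)
    (T : Finset (ℤ × ℤ_[2])) :
    P (E ∩ {ω | X n ω ∈ T}) = ∑ u ∈ T, P (E ∩ {ω | X n ω = u}) := by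
  have hset : E ∩ {ω | X n ω ∈ T} = ⋃ u ∈ T, E ∩ {ω | X n ω = u} := by
    ext ω
    simp only [Set.mem_inter_iff, Set.mem_iUnion, Set.mem_setOf_eq]
    constructor
    · rintro ⟨hE, hT⟩; exact ⟨X n ω, hT, hE, rfl⟩
    · rintro ⟨u, hu, hE, hXu⟩; exact ⟨hE, hXu ▸ hu⟩
  rw [hset]
  rw [measure_biUnion_finset]
  · intro u hu v hv huv
    simp only [Function.onFun]
    apply Set.disjoint_left.mpr
    rintro ω ⟨-, h1⟩ ⟨-, h2⟩
    exact huv (h1.symm.trans h2)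
  · intro u _
    exact hE.inter (meas_ev X hm n u)

lemma meas_finset_sum (n : ℕ) (T : Finset (ℤ × ℤ_[2])) :
    P {ω | X n ω ∈ T} = ∑ u ∈ T, P {ω | X n ω = u} := by
  have := meas_inter_finset P X hm Set.univ MeasurableSet.univ n T
  simpa using this


lemma step_sum (hP : IsProbabilityMeasure P) (hstep : ∀ t (u w : ℤ × ℤ_[2]),
      P {ω | X (t + 1) ω = w ∧ X t ω = u} =
        if Lambda.Adj u w then P {ω | X t ω = u} / (lamDeg u : ℝ≥0∞) else 0)
    (n : ℕ) (u : ℤ × ℤ_[2]) :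
    ∑ w ∈ Nbr u, P {ω | X (n+1) ω = w ∧ X n ω = u} = P {ω | X n ω = u} := by
  have hdeg : (lamDeg u : ℝ≥0∞) ≠ 0 ∧ (lamDeg u : ℝ≥0∞) ≠ ∞ := by
    constructor
    · simp only [ne_eq, Nat.cast_eq_zero]
      rw [lamDeg]; split <;> norm_num
    · exact ENNReal.natCast_ne_top _
  have : ∀ w ∈ Nbr u, P {ω | X (n+1) ω = w ∧ X n ω = u}
      = P {ω | X n ω = u} / (lamDeg u : ℝ≥0∞) := by
    intro w hw
    rw [hstep n u w, if_pos ((mem_Nbr_iff u w).mp hw)]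
  rw [Finset.sum_congr rfl this, Finset.sum_const, card_Nbr, nsmul_eq_mul,
    ENNReal.mul_div_cancel hdeg.1 hdeg.2]

lemma mass (hP : IsProbabilityMeasure P) (v₀ : ℤ × ℤ_[2])
    (h0 : P {ω | X 0 ω = v₀} = 1)
    (hstep : ∀ t (u w : ℤ × ℤ_[2]),
      P {ω | X (t + 1) ω = w ∧ X t ω = u} =
        if Lambda.Adj u w then P {ω | X t ω = u} / (lamDeg u : ℝ≥0∞) else 0) :
    ∀ n, P {ω | X n ω ∈ Sset v₀ n} = 1 := by
  intro n
  induction n with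
  | zero =>
    have : {ω | X 0 ω ∈ Sset v₀ 0} = {ω | X 0 ω = v₀} := by
      ext ω; simp [Sset]
    rw [this, h0]
  | succ n ih =>
    refine le_antisymm prob_le_one ?_
    calc (1:ℝ≥0∞) = P {ω | X n ω ∈ Sset v₀ n} := ih.symm
    _ = ∑ u ∈ Sset v₀ n, P {ω | X n ω = u} := meas_finset_sum P X hm n _
    _ = ∑ u ∈ Sset v₀ n, ∑ w ∈ Nbr u, P {ω | X (n+1) ω = w ∧ X n ω = u} := by
        refine Finset.sum_congr rfl fun u _ => (step_sum P X hm hP hstep n u).symm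
    _ ≤ ∑ u ∈ Sset v₀ n, P ({ω | X (n+1) ω ∈ Sset v₀ (n+1)} ∩ {ω | X n ω = u}) := by
        refine Finset.sum_le_sum fun u hu => ?_
        have hsub : ∀ w ∈ Nbr u,
            {ω | X (n+1) ω = w ∧ X n ω = u}
              ⊆ {ω | X (n+1) ω ∈ Sset v₀ (n+1)} ∩ {ω | X n ω = u} := by
          intro w hw ω hω
          obtain ⟨h1, h2⟩ := hω
          refine ⟨?_, h2⟩
          show X (n+1) ω ∈ Sset v₀ (n+1)
          rw [h1, Sset, Finset.mem_biUnion]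
          exact ⟨u, hu, hw⟩
        have hdisj : (Nbr u : Set (ℤ × ℤ_[2])).PairwiseDisjoint
            (fun w => {ω | X (n+1) ω = w ∧ X n ω = u}) := by
          intro w hw v hv hwv
          apply Set.disjoint_left.mpr
          rintro ω ⟨h1, -⟩ ⟨h2, -⟩
          exact hwv (h1.symm.trans h2)
        calc ∑ w ∈ Nbr u, P {ω | X (n+1) ω = w ∧ X n ω = u}
            = P (⋃ w ∈ Nbr u, {ω | X (n+1) ω = w ∧ X n ω = u}) := by
              rw [measure_biUnion_finset hdisj]
              intro w _
              have : {ω | X (n+1) ω = w ∧ X n ω = u}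
                  = {ω | X (n+1) ω = w} ∩ {ω | X n ω = u} := by
                ext ω; simp [Set.mem_setOf_eq]
              rw [this]
              exact (meas_ev X hm (n+1) w).inter (meas_ev X hm n u)
        _ ≤ P ({ω | X (n+1) ω ∈ Sset v₀ (n+1)} ∩ {ω | X n ω = u}) := by
              exact measure_mono (Set.iUnion₂_subset hsub)
    _ = P ({ω | X (n+1) ω ∈ Sset v₀ (n+1)} ∩ {ω | X n ω ∈ Sset v₀ n}) :=
        (meas_inter_finset P X hm _ (meas_ev_fin X hm (n+1) _) n _).symm
    _ ≤ P {ω | X (n+1) ω ∈ Sset v₀ (n+1)} := measure_mono Set.inter_subset_left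

lemma marginal (hP : IsProbabilityMeasure P) (v₀ : ℤ × ℤ_[2])
    (h0 : P {ω | X 0 ω = v₀} = 1)
    (hstep : ∀ t (u w : ℤ × ℤ_[2]),
      P {ω | X (t + 1) ω = w ∧ X t ω = u} =
        if Lambda.Adj u w then P {ω | X t ω = u} / (lamDeg u : ℝ≥0∞) else 0)
    (n : ℕ) (w : ℤ × ℤ_[2]) :
    P {ω | X (n+1) ω = w} = ∑ u ∈ Sset v₀ n, P {ω | X (n+1) ω = w ∧ X n ω = u} := by
  have hmass := mass P X hm hP v₀ h0 hstep n
  have hms : MeasurableSet {ω | X n ω ∈ Sset v₀ n} := meas_ev_fin X hm n _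
  have hcompl : P {ω | X n ω ∈ Sset v₀ n}ᶜ = 0 := by
    rw [measure_compl hms (measure_ne_top _ _), hmass, measure_univ]
    simp
  have key : P {ω | X (n+1) ω = w}
      = P ({ω | X (n+1) ω = w} ∩ {ω | X n ω ∈ Sset v₀ n}) := by
    refine le_antisymm ?_ (measure_mono Set.inter_subset_left)
    calc P {ω | X (n+1) ω = w}
        ≤ P (({ω | X (n+1) ω = w} ∩ {ω | X n ω ∈ Sset v₀ n})
            ∪ {ω | X n ω ∈ Sset v₀ n}ᶜ) := by
          apply measure_mono
          intro ω hω
          by_cases hc : X n ω ∈ Sset v₀ n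
          · exact Or.inl ⟨hω, hc⟩
          · exact Or.inr hc
    _ ≤ P ({ω | X (n+1) ω = w} ∩ {ω | X n ω ∈ Sset v₀ n})
        + P {ω | X n ω ∈ Sset v₀ n}ᶜ := measure_union_le _ _
    _ = P ({ω | X (n+1) ω = w} ∩ {ω | X n ω ∈ Sset v₀ n}) := by rw [hcompl, add_zero]
  rw [key, meas_inter_finset P X hm _ (meas_ev X hm (n+1) w) n]
  refine Finset.sum_congr rfl fun u _ => ?_
  rw [Set.setOf_and]


lemma F_succ_le (hP : IsProbabilityMeasure P) (v₀ : ℤ × ℤ_[2])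
    (h0 : P {ω | X 0 ω = v₀} = 1)
    (hstep : ∀ t (u w : ℤ × ℤ_[2]),
      P {ω | X (t + 1) ω = w ∧ X t ω = u} =
        if Lambda.Adj u w then P {ω | X t ω = u} / (lamDeg u : ℝ≥0∞) else 0)
    (n : ℕ) :
    ∑ u ∈ Sset v₀ (n+1), wt u * (P {ω | X (n+1) ω = u}).toReal
      ≤ (622/625) * ∑ u ∈ Sset v₀ n, wt u * (P {ω | X n ω = u}).toReal := by
  have hq : ∀ u w, (P {ω | X (n+1) ω = w ∧ X n ω = u}).toReal
      = if Lambda.Adj u w then (P {ω | X n ω = u}).toReal / (lamDeg u : ℝ) else 0 := by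
    intro u w
    rw [hstep n u w]
    split
    · rw [ENNReal.toReal_div]
      norm_num
    · simp
  have hswap : ∑ w ∈ Sset v₀ (n+1), wt w * (P {ω | X (n+1) ω = w}).toReal
      = ∑ u ∈ Sset v₀ n, ∑ w ∈ Sset v₀ (n+1),
          wt w * (P {ω | X (n+1) ω = w ∧ X n ω = u}).toReal := by
    rw [Finset.sum_comm]
    refine Finset.sum_congr rfl fun w _ => ?_
    rw [← Finset.mul_sum]
    congr 1
    rw [marginal P X hm hP v₀ h0 hstep n w, ENNReal.toReal_sum]
    intro u _
    exact measure_ne_top _ _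
  rw [hswap, Finset.mul_sum]
  refine Finset.sum_le_sum fun u hu => ?_
  have hdegpos : (0:ℝ) < (lamDeg u : ℝ) := by
    rw [lamDeg]; split <;> norm_num
  have hp0 : (0:ℝ) ≤ (P {ω | X n ω = u}).toReal := ENNReal.toReal_nonneg
  calc ∑ w ∈ Sset v₀ (n+1), wt w * (P {ω | X (n+1) ω = w ∧ X n ω = u}).toReal
      = ∑ w ∈ Sset v₀ (n+1),
          (if w ∈ Nbr u then wt w * ((P {ω | X n ω = u}).toReal / (lamDeg u : ℝ)) else 0) := by
        refine Finset.sum_congr rfl fun w _ => ?_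
        rw [hq u w]
        by_cases hadj : Lambda.Adj u w
        · rw [if_pos hadj, if_pos ((mem_Nbr_iff u w).mpr hadj)]
        · rw [if_neg hadj, if_neg (fun hc => hadj ((mem_Nbr_iff u w).mp hc)), mul_zero]
  _ = ∑ w ∈ (Sset v₀ (n+1)).filter (· ∈ Nbr u),
          wt w * ((P {ω | X n ω = u}).toReal / (lamDeg u : ℝ)) := by
        rw [Finset.sum_filter]
  _ ≤ ∑ w ∈ Nbr u, wt w * ((P {ω | X n ω = u}).toReal / (lamDeg u : ℝ)) := by
        refine Finset.sum_le_sum_of_subset_of_nonneg ?_ ?_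
        · intro w hw
          exact (Finset.mem_filter.mp hw).2
        · intro w _ _
          have := wt_pos w
          positivity
  _ = (∑ w ∈ Nbr u, wt w) * ((P {ω | X n ω = u}).toReal / (lamDeg u : ℝ)) := by
        rw [Finset.sum_mul]
  _ ≤ ((622/625) * (lamDeg u) * wt u) * ((P {ω | X n ω = u}).toReal / (lamDeg u : ℝ)) := by
        refine mul_le_mul_of_nonneg_right (sum_wt_Nbr u) (by positivity)
  _ = (622/625) * (wt u * (P {ω | X n ω = u}).toReal) := by
        field_simp

lemma F_le (hP : IsProbabilityMeasure P) (v₀ : ℤ × ℤ_[2])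
    (h0 : P {ω | X 0 ω = v₀} = 1)
    (hstep : ∀ t (u w : ℤ × ℤ_[2]),
      P {ω | X (t + 1) ω = w ∧ X t ω = u} =
        if Lambda.Adj u w then P {ω | X t ω = u} / (lamDeg u : ℝ≥0∞) else 0)
    (n : ℕ) :
    ∑ u ∈ Sset v₀ n, wt u * (P {ω | X n ω = u}).toReal ≤ (622/625)^n * wt v₀ := by
  induction n with
  | zero =>
    rw [Sset, Finset.sum_singleton, h0, pow_zero, one_mul]
    simp
  | succ n ih =>
    calc ∑ u ∈ Sset v₀ (n+1), wt u * (P {ω | X (n+1) ω = u}).toReal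
        ≤ (622/625) * ∑ u ∈ Sset v₀ n, wt u * (P {ω | X n ω = u}).toReal :=
          F_succ_le P X hm hP v₀ h0 hstep n
    _ ≤ (622/625) * ((622/625)^n * wt v₀) := by
          refine mul_le_mul_of_nonneg_left ih (by norm_num)
    _ = (622/625)^(n+1) * wt v₀ := by ring

lemma tail_bound (hP : IsProbabilityMeasure P) (v₀ : ℤ × ℤ_[2])
    (h0 : P {ω | X 0 ω = v₀} = 1)
    (hstep : ∀ t (u w : ℤ × ℤ_[2]),
      P {ω | X (t + 1) ω = w ∧ X t ω = u} =
        if Lambda.Adj u w then P {ω | X t ω = u} / (lamDeg u : ℝ≥0∞) else 0)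
    (n : ℕ) (k : ℤ) :
    (P {ω | (X n ω).1 ≤ k}).toReal
      ≤ (21/20:ℝ)^k * ((622/625)^n * ((21/20:ℝ)^(-v₀.1) * (1011/1000))) := by
  have hmass := mass P X hm hP v₀ h0 hstep n
  have hms : MeasurableSet {ω | X n ω ∈ Sset v₀ n} := meas_ev_fin X hm n _
  have hcompl : P {ω | X n ω ∈ Sset v₀ n}ᶜ = 0 := by
    rw [measure_compl hms (measure_ne_top _ _), hmass, measure_univ]
    simp
  -- restrict to the filtered finset
  set T := (Sset v₀ n).filter (fun u => u.1 ≤ k) with hT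
  have key : P {ω | (X n ω).1 ≤ k} ≤ P {ω | X n ω ∈ T} := by
    calc P {ω | (X n ω).1 ≤ k}
        ≤ P ({ω | X n ω ∈ T} ∪ {ω | X n ω ∈ Sset v₀ n}ᶜ) := by
          apply measure_mono
          intro ω hω
          by_cases hc : X n ω ∈ Sset v₀ n
          · exact Or.inl (by
              show X n ω ∈ T
              rw [hT, Finset.mem_filter]
              exact ⟨hc, hω⟩)
          · exact Or.inr hc
    _ ≤ P {ω | X n ω ∈ T} + P {ω | X n ω ∈ Sset v₀ n}ᶜ := measure_union_le _ _
    _ = P {ω | X n ω ∈ T} := by rw [hcompl, add_zero]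
  have key2 : (P {ω | (X n ω).1 ≤ k}).toReal ≤ ∑ u ∈ T, (P {ω | X n ω = u}).toReal := by
    rw [← ENNReal.toReal_sum (fun u _ => measure_ne_top _ _),
      ← meas_finset_sum P X hm n T]
    exact ENNReal.toReal_mono (measure_ne_top _ _) key
  refine key2.trans ?_
  have hRk : (0:ℝ) < (21/20:ℝ)^k := zpow_pos (by norm_num) _
  calc ∑ u ∈ T, (P {ω | X n ω = u}).toReal
      ≤ ∑ u ∈ T, (21/20:ℝ)^k * (wt u * (P {ω | X n ω = u}).toReal) := by
        refine Finset.sum_le_sum fun u hu => ?_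
        have hu' := Finset.mem_filter.mp hu
        have hle : u.1 ≤ k := hu'.2
        have h1 : (21/20:ℝ)^(-u.1) ≥ (21/20:ℝ)^(-k) := by
          apply zpow_le_zpow_right₀ (by norm_num : (1:ℝ) ≤ 21/20)
          omega
        have h2 : (21/20:ℝ)^k * wt u ≥ 1 := by
          rw [wt]
          have hg := gp_ge_one u.2
          have h3 : (21/20:ℝ)^k * (21/20:ℝ)^(-u.1) ≥ 1 := by
            rw [← zpow_add₀ (by norm_num : (21/20:ℝ) ≠ 0)]
            have : (0:ℤ) ≤ k + -u.1 := by omega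
            calc (1:ℝ) = (21/20:ℝ)^(0:ℤ) := by norm_num
            _ ≤ (21/20:ℝ)^(k + -u.1) :=
                zpow_le_zpow_right₀ (by norm_num : (1:ℝ) ≤ 21/20) this
          nlinarith [zpow_pos (show (0:ℝ) < 21/20 by norm_num) (-u.1)]
        have hp0 : (0:ℝ) ≤ (P {ω | X n ω = u}).toReal := ENNReal.toReal_nonneg
        nlinarith
  _ = (21/20:ℝ)^k * ∑ u ∈ T, wt u * (P {ω | X n ω = u}).toReal := by
        rw [Finset.mul_sum]
  _ ≤ (21/20:ℝ)^k * ∑ u ∈ Sset v₀ n, wt u * (P {ω | X n ω = u}).toReal := by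
        refine mul_le_mul_of_nonneg_left ?_ (le_of_lt hRk)
        refine Finset.sum_le_sum_of_subset_of_nonneg (Finset.filter_subset _ _) ?_
        intro u _ _
        have := wt_pos u
        positivity
  _ ≤ (21/20:ℝ)^k * ((622/625)^n * ((21/20:ℝ)^(-v₀.1) * (1011/1000))) := by
        refine mul_le_mul_of_nonneg_left ?_ (le_of_lt hRk)
        refine (F_le P X hm hP v₀ h0 hstep n).trans ?_
        refine mul_le_mul_of_nonneg_left ?_ (by positivity)
        rw [wt]
        have := gp_le v₀.2
        have := zpow_pos (show (0:ℝ) < 21/20 by norm_num) (-v₀.1)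
        nlinarith

end Walk



theorem walk_depth_drift (v₀ : ℤ × ℤ_[2]) (m₀ : ℤ) (hv : v₀.1 = m₀)
    (Ω : Type) [MeasurableSpace Ω] (P : Measure Ω) [IsProbabilityMeasure P]
    (X : ℕ → Ω → ℤ × ℤ_[2]) (hX : IsWalkL P X v₀) :
    (∀ᵐ ω ∂P, (1 : ℝ) / 6 ≤ atTop.liminf fun t : ℕ => ((X (2 * t) ω).1 : ℝ) / t) ∧
    ∀ t : ℕ, 12 ≤ t →
      P {ω | (X (2 * t) ω).1 ≤ m₀ + 1} ≤ ENNReal.ofReal (Real.exp (-(t : ℝ) / 1152)) := by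
  obtain ⟨hm, h0, hstep⟩ := hX
  have hP : IsProbabilityMeasure P := inferInstance
  subst hv
  -- the master tail bound
  have master : ∀ (n : ℕ) (k : ℤ), (P {ω | (X n ω).1 ≤ k}).toReal
      ≤ (21/20:ℝ)^k * ((622/625:ℝ)^n * ((21/20:ℝ)^(-v₀.1) * (1011/1000))) :=
    fun n k => tail_bound P X hm hP v₀ h0 hstep n k
  have hRne : (21/20:ℝ) ≠ 0 := by norm_num
  constructor
  · -- part 1 : liminf
    set s : ℝ := 4993/5000 with hs
    set A : ℕ → Set Ω := fun t => {ω | (X (2*t) ω).1 ≤ ((t/6 : ℕ) : ℤ)} with hA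
    set C : ℝ := (21/20:ℝ)^(-v₀.1) * (1011/1000) with hC
    have hCpos : 0 < C := by
      rw [hC]; positivity
    have hbound : ∀ t : ℕ, (P (A t)).toReal ≤ C * s^(t - 5) := by
      intro t
      have h1 := master (2*t) ((t/6 : ℕ) : ℤ)
      have hq : (21/20:ℝ)^(((t/6 : ℕ) : ℤ)) * (622/625:ℝ)^(2*t) ≤ s^(t-5) := by
        set n := t/6 with hn
        have e1 : ((21/20:ℝ))^((n : ℤ)) = (21/20:ℝ)^(n:ℕ) := zpow_natCast _ n
        have e2 : ((622:ℝ)/625)^(2*t) ≤ ((622:ℝ)/625)^(12*n) := by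
          apply pow_le_pow_of_le_one (by norm_num) (by norm_num)
          omega
        have e3 : (21/20:ℝ)^(n:ℕ) * ((622:ℝ)/625)^(12*n)
            = ((21/20:ℝ) * ((622:ℝ)/625)^12)^n := by
          rw [mul_pow, pow_mul]
        have e4 : ((21/20:ℝ) * ((622:ℝ)/625)^12) ≤ s^6 := by
          rw [hs]; norm_num
        have e5 : ((21/20:ℝ) * ((622:ℝ)/625)^12)^n ≤ (s^6)^n := by
          apply pow_le_pow_left₀ (by positivity) e4
        have e6 : (s^6)^n = s^(6*n) := by rw [← pow_mul]
        have e7 : s^(6*n) ≤ s^(t-5) := by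
          apply pow_le_pow_of_le_one (by norm_num) (by norm_num)
          omega
        calc (21/20:ℝ)^(((t/6:ℕ)):ℤ) * (622/625:ℝ)^(2*t)
            = (21/20:ℝ)^(n:ℕ) * ((622:ℝ)/625)^(2*t) := by rw [← e1]
        _ ≤ (21/20:ℝ)^(n:ℕ) * ((622:ℝ)/625)^(12*n) := by
            apply mul_le_mul_of_nonneg_left e2 (by positivity)
        _ = ((21/20:ℝ) * ((622:ℝ)/625)^12)^n := e3
        _ ≤ (s^6)^n := e5
        _ = s^(6*n) := e6
        _ ≤ s^(t-5) := e7
      calc (P (A t)).toReal ≤ (21/20:ℝ)^(((t/6:ℕ)):ℤ) * ((622/625:ℝ)^(2*t) * C) := h1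
      _ = ((21/20:ℝ)^(((t/6:ℕ)):ℤ) * (622/625:ℝ)^(2*t)) * C := by ring
      _ ≤ s^(t-5) * C := mul_le_mul_of_nonneg_right hq (le_of_lt hCpos)
      _ = C * s^(t-5) := by ring
    have hsum : Summable (fun t : ℕ => C * s^(t-5)) := by
      apply Summable.mul_left
      have h5 : Summable (fun t : ℕ => s^((t+5)-5)) := by
        simp only [Nat.add_sub_cancel]
        exact summable_geometric_of_lt_one (by norm_num) (by norm_num)
      exact (summable_nat_add_iff 5).mp h5
    have htsum : ∑' t, P (A t) ≠ ∞ := by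
      have hle : ∑' t, P (A t) ≤ ∑' t, ENNReal.ofReal (C * s^(t-5)) := by
        refine ENNReal.tsum_le_tsum fun t => ?_
        rw [← ENNReal.ofReal_toReal (measure_ne_top P (A t))]
        exact ENNReal.ofReal_le_ofReal (hbound t)
      rw [← ENNReal.ofReal_tsum_of_nonneg (fun t => by positivity) hsum] at hle
      exact ne_top_of_le_ne_top ENNReal.ofReal_ne_top hle
    have hBC := measure_limsup_atTop_eq_zero htsum
    have hmem : ∀ n : ℕ, ∀ᵐ ω ∂P, X n ω ∈ Sset v₀ n := by
      intro n
      have hmass := mass P X hm hP v₀ h0 hstep n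
      have hms : MeasurableSet {ω | X n ω ∈ Sset v₀ n} := meas_ev_fin X hm n _
      rw [ae_iff]
      have : {ω | ¬ X n ω ∈ Sset v₀ n} = {ω | X n ω ∈ Sset v₀ n}ᶜ := rfl
      rw [this, measure_compl hms (measure_ne_top _ _), hmass, measure_univ]
      simp
    have hmem' : ∀ᵐ ω ∂P, ∀ n : ℕ, X n ω ∈ Sset v₀ n := ae_all_iff.mpr hmem
    have hnotlimsup : ∀ᵐ ω ∂P, ω ∉ limsup A atTop := by
      rw [ae_iff]
      simpa using hBC
    filter_upwards [hmem', hnotlimsup] with ω hω hω2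
    have hev : ∀ᶠ t in atTop, ω ∉ A t := by
      rw [mem_limsup_iff_frequently_mem, Filter.not_frequently] at hω2
      exact hω2
    have hev2 : ∀ᶠ t in atTop, (1:ℝ)/6 ≤ ((X (2*t) ω).1 : ℝ) / t := by
      filter_upwards [hev, Filter.eventually_ge_atTop 1] with t hnA ht1
      have hD : ¬ ((X (2*t) ω).1 ≤ ((t/6 : ℕ) : ℤ)) := hnA
      push_neg at hD
      have hD' : ((t/6 : ℕ) : ℤ) + 1 ≤ (X (2*t) ω).1 := hD
      have h6 : (t : ℤ) ≤ 6 * (X (2*t) ω).1 := by omega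
      have htpos : (0:ℝ) < t := by exact_mod_cast ht1
      rw [div_le_div_iff₀ (by norm_num) htpos]
      have : (t:ℝ) ≤ 6 * ((X (2*t) ω).1 : ℝ) := by exact_mod_cast h6
      linarith
    have hbdd : IsBoundedUnder (· ≤ ·) atTop (fun t : ℕ => ((X (2*t) ω).1 : ℝ) / t) := by
      refine isBoundedUnder_of ⟨|(v₀.1 : ℝ)| + 2, fun t => ?_⟩
      rcases Nat.eq_zero_or_pos t with ht | ht
      · subst ht
        simp
        positivity
      · have htpos : (0:ℝ) < t := by exact_mod_cast ht
        have hd := Sset_depth v₀ (2*t) _ (hω (2*t))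
        have hub : ((X (2*t) ω).1 : ℝ) ≤ (v₀.1 : ℝ) + 2*t := by
          push_cast
          exact_mod_cast hd
        rw [div_le_iff₀ htpos]
        have ht1 : (1:ℝ) ≤ t := by exact_mod_cast ht
        have habs : (v₀.1:ℝ) ≤ |(v₀.1:ℝ)| := le_abs_self _
        nlinarith [abs_nonneg ((v₀.1:ℝ))]
    exact le_liminf_of_le (hbdd.isCoboundedUnder_ge) hev2
  · -- part 2
    intro t ht
    have h1 := master (2*t) (v₀.1 + 1)
    have hzp : (21/20:ℝ)^(v₀.1+1) * (21/20:ℝ)^(-v₀.1) = 21/20 := by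
      rw [← zpow_add₀ hRne]
      norm_num
    have hchain : (P {ω | (X (2*t) ω).1 ≤ v₀.1 + 1}).toReal ≤ Real.exp (-(t:ℝ)/1152) := by
      have hb : (P {ω | (X (2*t) ω).1 ≤ v₀.1 + 1}).toReal
          ≤ (21/20) * (1011/1000) * (((622:ℝ)/625)^2)^t := by
        refine h1.trans ?_
        have : (21/20:ℝ)^(v₀.1+1) * ((622/625:ℝ)^(2*t) * ((21/20:ℝ)^(-v₀.1) * (1011/1000)))
            = ((21/20:ℝ)^(v₀.1+1) * (21/20:ℝ)^(-v₀.1)) * (1011/1000) * (622/625:ℝ)^(2*t) := by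
          ring
        rw [this, hzp, pow_mul]
      refine hb.trans ?_
      set x : ℝ := (1151/1152 : ℝ) / ((622:ℝ)/625)^2 with hx
      have hx1 : (1:ℝ) + 11/2000 ≤ x := by rw [hx]; norm_num
      have hstep1 : (21/20:ℝ) * (1011/1000) ≤ 1 + (12:ℕ) * (11/2000) := by norm_num
      have hstep2 : (1:ℝ) + (12:ℕ) * (11/2000) ≤ 1 + (t:ℕ) * (11/2000) := by
        have : (12:ℝ) ≤ (t:ℝ) := by exact_mod_cast ht
        nlinarith
      have hstep3 : (1:ℝ) + (t:ℕ) * (11/2000) ≤ (1 + 11/2000)^t :=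
        one_add_mul_le_pow (by norm_num) t
      have hstep4 : ((1:ℝ) + 11/2000)^t ≤ x^t := pow_le_pow_left₀ (by norm_num) hx1 t
      have hfin : (21/20:ℝ) * (1011/1000) * (((622:ℝ)/625)^2)^t ≤ (1151/1152:ℝ)^t := by
        have hxpos : (0:ℝ) < ((622:ℝ)/625)^2 := by positivity
        have : (21/20:ℝ) * (1011/1000) ≤ x^t :=
          le_trans hstep1 (le_trans hstep2 (le_trans hstep3 hstep4))
        calc (21/20:ℝ) * (1011/1000) * (((622:ℝ)/625)^2)^t
            ≤ x^t * (((622:ℝ)/625)^2)^t := by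
              apply mul_le_mul_of_nonneg_right this (by positivity)
        _ = (x * ((622:ℝ)/625)^2)^t := by rw [mul_pow]
        _ = (1151/1152:ℝ)^t := by
              congr 1
              rw [hx, div_mul_cancel₀]
              exact ne_of_gt hxpos
      refine hfin.trans ?_
      have hce : (1151/1152:ℝ) ≤ Real.exp (-(1:ℝ)/1152) := by
        have := Real.add_one_le_exp (-(1:ℝ)/1152)
        linarith
      calc (1151/1152:ℝ)^t ≤ (Real.exp (-(1:ℝ)/1152))^t :=
            pow_le_pow_left₀ (by norm_num) hce t
      _ = Real.exp (-(t:ℝ)/1152) := by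
            rw [← Real.exp_nat_mul]
            congr 1
            ring
    calc P {ω | (X (2*t) ω).1 ≤ v₀.1 + 1}
        = ENNReal.ofReal ((P {ω | (X (2*t) ω).1 ≤ v₀.1 + 1}).toReal) :=
          (ENNReal.ofReal_toReal (measure_ne_top _ _)).symm
    _ ≤ ENNReal.ofReal (Real.exp (-(t:ℝ)/1152)) := ENNReal.ofReal_le_ofReal hchain
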